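/- arXiv:2505.02088 — 2 statements merged into one kernel-verified Lean document; each statement's English description precedes it below -/
import Mathlib

section
/- Every quasiorder (P, ≤) has a maximal antichain I such that for every p ∈ I, either the restriction P_{≥p} = {q ∈ P : q ≥ p} is directed (any two of its members have a common upper bound), or there is no q ≥ p such that P_{≥q} is directed. -/
/-- `p` and `q` are compatible in the quasiorder `P`. -/
def Compat {P : Type*} [Preorder P] (p q : P) : Prop := ∃ r, p ≤ r ∧ q ≤ r

/-- `P_{≥p}` is directed: any two elements above `p` have a common upper bound. -/
def DirectedAbove {P : Type*} [Preorder P] (p : P) : Prop :=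
  ∀ q r, p ≤ q → p ≤ r → ∃ s, p ≤ s ∧ q ≤ s ∧ r ≤ s

/-- Every quasiorder has a maximal antichain `I` such that for every `p ∈ I`,
either `P_{≥p}` is directed, or no `q ≥ p` has `P_{≥q}` directed. -/
theorem exists_nice_maximal_antichain (P : Type*) [Preorder P] :
    ∃ I : Set P,
      (∀ p ∈ I, ∀ q ∈ I, p ≠ q → ¬ Compat p q) ∧
      (∀ p : P, ∃ q ∈ I, Compat p q) ∧
      (∀ p ∈ I, DirectedAbove p ∨ ¬ ∃ q, p ≤ q ∧ DirectedAbove q) := by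
  classical
  set D : Set P := {p | DirectedAbove p ∨ ¬ ∃ q, p ≤ q ∧ DirectedAbove q} with hDdef
  have hD : ∀ p : P, ∃ q, p ≤ q ∧ q ∈ D := by
    intro p
    by_cases h : ∃ q, p ≤ q ∧ DirectedAbove q
    · obtain ⟨q, hq, hd⟩ := h
      exact ⟨q, hq, Or.inl hd⟩
    · exact ⟨p, le_refl p, Or.inr h⟩
  set S : Set (Set P) :=
    {A | A ⊆ D ∧ ∀ p ∈ A, ∀ q ∈ A, p ≠ q → ¬ Compat p q} with hSdef
  obtain ⟨M, hM⟩ : ∃ M, Maximal (· ∈ S) M := by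
    apply zorn_subset
    intro c hcS hchain
    refine ⟨⋃₀ c, ⟨?_, ?_⟩, fun A hA => Set.subset_sUnion_of_mem hA⟩
    · intro p hp
      obtain ⟨A, hA, hpA⟩ := hp
      exact (hcS hA).1 hpA
    · rintro p ⟨A, hA, hpA⟩ q ⟨B, hB, hqB⟩ hne
      rcases hchain.total hA hB with h | h
      · exact (hcS hB).2 p (h hpA) q hqB hne
      · exact (hcS hA).2 p hpA q (h hqB) hne
  refine ⟨M, hM.1.2, ?_, fun p hp => hM.1.1 hp⟩
  intro p
  obtain ⟨q, hpq, hqD⟩ := hD p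
  by_cases hq : ∃ r ∈ M, Compat q r
  · obtain ⟨r, hrM, s, hqs, hrs⟩ := hq
    exact ⟨r, hrM, s, le_trans hpq hqs, hrs⟩
  · push_neg at hq
    have : insert q M ⊆ M := by
      apply hM.2
      · constructor
        · intro x hx
          rcases hx with rfl | hx
          · exact hqD
          · exact hM.1.1 hx
        · rintro x hx y hy hne
          rcases hx with rfl | hx
          · rcases hy with rfl | hy
            · exact absurd rfl hne
            · exact hq y hy
          · rcases hy with rfl | hy
            · intro ⟨s, hxs, hys⟩
              exact hq x hx ⟨s, hys, hxs⟩
            · exact hM.1.2 x hx y hy hne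
      · exact Set.subset_insert q M
    have hqM : q ∈ M := this (Set.mem_insert q M)
    exact ⟨q, hqM, q, hpq, le_refl q⟩
end

section
/- Let θ be a regular cardinal with θ > ℵ₁ and λ any cardinal. There is no sequence ⟨Λ_ε : ε < θ⟩ such that: (i) each Λ_ε is a countable nonempty subset of ^ε λ (functions from ε to λ); (ii) the family is closed under restrictions, i.e. ν ∈ Λ_ζ and ε < ζ imply ν↾ε ∈ Λ_ε; (iii) every element extends, i.e. for all ε < ζ < θ and ν ∈ Λ_ε there is ρ ∈ Λ_ζ with ν ⊲ ρ; and (iv) the tree Λ = ⋃_{ε<θ} Λ_ε has no θ-branch, i.e. there is no η ∈ ^θ λ with η↾ε ∈ Λ_ε for all ε < θ. -/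
open Cardinal Ordinal


universe v

noncomputable def nbChain (G : Ordinal.{v} → Ordinal.{v}) (i : Ordinal.{v}) : Ordinal.{v} :=
  Ordinal.blsub.{v,v} i (fun j hj => G (nbChain G j))
termination_by i
decreasing_by exact hj

theorem nbChain_def (G : Ordinal.{v} → Ordinal.{v}) (i : Ordinal.{v}) :
    nbChain G i = Ordinal.blsub.{v,v} i (fun j _ => G (nbChain G j)) := by
  rw [nbChain]

theorem nbChain_strictMono {G : Ordinal → Ordinal} (hG : ∀ o, o < G o) :
    StrictMono (nbChain G) := by
  intro i j hij
  calc nbChain G i < G (nbChain G i) := hG _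
    _ < nbChain G j := by
        rw [nbChain_def G j]
        exact Ordinal.lt_blsub _ i hij

theorem nbChain_mono {G : Ordinal → Ordinal} (hG : ∀ o, o < G o) :
    Monotone (nbChain G) :=
  (nbChain_strictMono hG).monotone

theorem G_lt_nbChain_succ {G : Ordinal → Ordinal} {i j : Ordinal} (hij : i < j) :
    G (nbChain G i) < nbChain G j := by
  rw [nbChain_def G j]
  exact Ordinal.lt_blsub _ i hij

universe u

theorem nbChain_lt_ord {c : Cardinal.{u}} (hreg : c.IsRegular)
    {G : Ordinal.{u} → Ordinal.{u}} (hG : ∀ o < c.ord, G o < c.ord) :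
    ∀ i < c.ord, nbChain G i < c.ord := by
  intro i
  induction i using Ordinal.induction with
  | h i IH =>
    intro hi
    rw [nbChain_def]
    refine Cardinal.blsub_lt_ord_of_isRegular.{u,u} hreg (Cardinal.lt_ord.1 hi) ?_
    intro j hj
    exact hG _ (IH j hj (hj.trans hi))

/-- Core ordinal lemma: there is `δ < c.ord` above `x₀`, closed under `B`, in which
every countable subset is bounded. -/
theorem nb_core_ord {c : Cardinal.{u}} (hreg : c.IsRegular) (hc : ℵ₁ < c)
    (B : Ordinal.{u} → Ordinal.{u}) (hB : ∀ o < c.ord, B o < c.ord)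
    (x₀ : Ordinal.{u}) (hx₀ : x₀ < c.ord) :
    ∃ δ < c.ord, x₀ < δ ∧ (∀ γ < δ, B γ < δ) ∧
      (∀ g : ℕ → Ordinal.{u}, (∀ n, g n < δ) → ∃ γ < δ, ∀ n, g n < γ) := by
  have hℵ0c : ℵ₀ ≤ c := hreg.aleph0_le
  have hordlim : Order.IsSuccLimit c.ord := Cardinal.isSuccLimit_ord hℵ0c
  -- monotone closure of B
  set B' : Ordinal → Ordinal := fun o => Ordinal.bsup (o + 1) (fun o' _ => B o') with hB'
  have hB'le : ∀ {γ o : Ordinal}, γ ≤ o → B γ ≤ B' o := by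
    intro γ o h
    exact Ordinal.le_bsup (fun o' (_ : o' < o + 1) => B o') γ
      (by rw [Ordinal.add_one_eq_succ, Order.lt_succ_iff]; exact h)
  have hB'mono : Monotone B' := by
    intro o₁ o₂ h
    refine Ordinal.bsup_le_iff.2 (fun o' h' => ?_)
    exact Ordinal.le_bsup (fun o'' (_ : o'' < o₂ + 1) => B o'') o'
      (h'.trans_le (by simpa using h))
  have hB'lt : ∀ o < c.ord, B' o < c.ord := by
    intro o ho
    refine Cardinal.bsup_lt_ord_of_isRegular.{u,u} hreg ?_ ?_
    · rw [Ordinal.add_one_eq_succ, Ordinal.card_succ]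
      exact Cardinal.add_lt_of_lt hℵ0c (Cardinal.lt_ord.1 ho)
        (lt_of_lt_of_le Cardinal.one_lt_aleph0 hℵ0c)
    · intro o' ho'
      refine hB o' (lt_of_le_of_lt ?_ ho)
      rw [Ordinal.add_one_eq_succ, Order.lt_succ_iff] at ho'
      exact ho'
  set G : Ordinal → Ordinal := fun o => max (max o (B' o)) x₀ + 1 with hGdef
  have hG1 : ∀ o, o < G o := fun o =>
    lt_of_le_of_lt (le_max_left o (B' o)) (lt_of_le_of_lt (le_max_left _ x₀) (Order.lt_succ _))
  have hGx₀ : ∀ o, x₀ < G o := fun o =>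
    lt_of_le_of_lt (le_max_right _ x₀) (Order.lt_succ _)
  have hGB' : ∀ o, B' o < G o := fun o =>
    lt_of_le_of_lt (le_trans (le_max_right o (B' o)) (le_max_left _ x₀)) (Order.lt_succ _)
  have hGmono : Monotone G := by
    intro o₁ o₂ h
    have : max (max o₁ (B' o₁)) x₀ ≤ max (max o₂ (B' o₂)) x₀ :=
      max_le_max (max_le_max h (hB'mono h)) le_rfl
    simpa [hGdef] using add_le_add_right this 1
  have hG2 : ∀ o < c.ord, G o < c.ord := by
    intro o ho
    rw [hGdef]
    simp only []
    rw [Ordinal.add_one_eq_succ]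
    exact hordlim.succ_lt (max_lt (max_lt ho (hB'lt o ho)) hx₀)
  have hω₁lim : Order.IsSuccLimit (ℵ₁ : Cardinal).ord := Cardinal.isSuccLimit_ord (aleph0_le_aleph 1)
  have hω₁lt : (ℵ₁ : Cardinal).ord < c.ord := Cardinal.ord_lt_ord.2 hc
  refine ⟨nbChain G (ℵ₁ : Cardinal).ord, nbChain_lt_ord hreg hG2 _ hω₁lt, ?_, ?_, ?_⟩
  · -- x₀ < δ
    calc x₀ < G (nbChain G 0) := hGx₀ _
      _ < nbChain G (ℵ₁ : Cardinal).ord := G_lt_nbChain_succ hω₁lim.pos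
  · -- closure under B
    intro γ hγ
    rw [nbChain_def] at hγ
    obtain ⟨i, hi, hle⟩ := Ordinal.lt_blsub_iff.{u,u}.1 hγ
    have h1 : G (nbChain G i) < nbChain G (i + 1) := G_lt_nbChain_succ (Order.lt_succ _)
    have h2 : B γ ≤ B' (nbChain G (i + 1)) :=
      le_trans (hB'le (hle.trans h1.le)) le_rfl
    calc B γ ≤ B' (nbChain G (i + 1)) := h2
      _ < G (nbChain G (i + 1)) := hGB' _
      _ < nbChain G (i + 2) := by
          have : (i + 1 : Ordinal) < i + 2 := by
            rw [show (i + 2 : Ordinal) = (i+1) + 1 from by rw [add_assoc]; norm_num]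
            exact Order.lt_succ _
          exact G_lt_nbChain_succ this
      _ ≤ nbChain G (ℵ₁ : Cardinal).ord := by
          refine (nbChain_mono hG1) ?_
          have h1 : i + 1 < (ℵ₁ : Cardinal).ord := hω₁lim.succ_lt hi
          have : (i + 2 : Ordinal) = (i + 1) + 1 := by rw [add_assoc]; norm_num
          rw [this]
          exact (hω₁lim.succ_lt h1).le
  · -- countable bounding
    intro g hg
    have hsel : ∀ n, ∃ i, ∃ _ : i < (ℵ₁ : Cardinal).ord, g n ≤ G (nbChain G i) := by
      intro n
      have := hg n
      rw [nbChain_def] at this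
      exact Ordinal.lt_blsub_iff.{u,u}.1 this
    choose I hI hgle using hsel
    set i₀ : Ordinal := iSup (fun n : ℕ => I n + 1) with hi₀
    have hi₀lt : i₀ < (ℵ₁ : Cardinal).ord := by
      refine Cardinal.iSup_lt_ord_lift_of_isRegular.{0,u} Cardinal.isRegular_aleph_one ?_ ?_
      · rw [Cardinal.mk_nat, Cardinal.lift_aleph0]
        exact Cardinal.aleph0_lt_aleph_one
      · intro n
        exact hω₁lim.succ_lt (hI n)
    refine ⟨nbChain G i₀, nbChain_strictMono hG1 hi₀lt, ?_⟩
    intro n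
    calc g n ≤ G (nbChain G (I n)) := hgle n
      _ < nbChain G (I n + 1) := G_lt_nbChain_succ (Order.lt_succ _)
      _ ≤ nbChain G i₀ := nbChain_mono hG1 (Ordinal.le_iSup (fun n : ℕ => I n + 1) n)

universe u'
/-- Transfer of the core lemma to `θ.ord.ToType`. -/
theorem nb_core (θ : Cardinal.{u}) (hreg : θ.IsRegular) (hθ : ℵ₁ < θ)
    (B : θ.ord.ToType → θ.ord.ToType) (x₀ : θ.ord.ToType) :
    ∃ δ : θ.ord.ToType, x₀ < δ ∧ (∀ γ, γ < δ → B γ < δ) ∧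
      (∀ g : ℕ → θ.ord.ToType, (∀ n, g n < δ) → ∃ γ, γ < δ ∧ ∀ n, g n < γ) := by
  set e := (Ordinal.ToType.mk : Set.Iio θ.ord ≃o θ.ord.ToType) with he
  -- key transfer fact
  have hlt : ∀ (x : θ.ord.ToType) (o : Ordinal.{u}) (h : o < θ.ord),
      (((e.symm x : Set.Iio θ.ord) : Ordinal) < o ↔ x < e ⟨o, h⟩) := by
    intro x o h
    constructor
    · intro h1
      have h2 : e.symm x < (⟨o, h⟩ : Set.Iio θ.ord) := Subtype.coe_lt_coe.1 h1
      have := e.lt_iff_lt.2 h2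
      rwa [e.apply_symm_apply] at this
    · intro h1
      have h2 : e.symm x < e.symm (e ⟨o, h⟩) := e.symm.lt_iff_lt.2 h1
      rw [e.symm_apply_apply] at h2
      exact Subtype.coe_lt_coe.2 h2
  set Bo : Ordinal.{u} → Ordinal.{u} := fun o =>
    if h : o < θ.ord then ((e.symm (B (e ⟨o, h⟩))) : Ordinal) else 0 with hBo
  have hBolt : ∀ o < θ.ord, Bo o < θ.ord := by
    intro o ho
    rw [hBo]
    simp only [ho, dif_pos]
    exact (e.symm _).2
  obtain ⟨δo, hδo, hx₀δ, hclosed, hbound⟩ :=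
    nb_core_ord hreg hθ Bo hBolt ((e.symm x₀ : Set.Iio θ.ord) : Ordinal) (e.symm x₀).2
  refine ⟨e ⟨δo, hδo⟩, (hlt x₀ δo hδo).1 hx₀δ, ?_, ?_⟩
  · intro γ hγ
    have h1 : ((e.symm γ : Set.Iio θ.ord) : Ordinal) < δo := (hlt γ δo hδo).2 hγ
    have h2 := hclosed _ h1
    have h3 : Bo ((e.symm γ : Set.Iio θ.ord) : Ordinal) = ((e.symm (B γ) : Set.Iio θ.ord) : Ordinal) := by
      rw [hBo]
      simp only []
      rw [dif_pos (show ((e.symm γ : Set.Iio θ.ord) : Ordinal) < θ.ord from (e.symm γ).2),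
        Subtype.coe_eta, e.apply_symm_apply]
    rw [h3] at h2
    exact (hlt (B γ) δo hδo).1 h2
  · intro g hg
    have h1 : ∀ n, ((e.symm (g n) : Set.Iio θ.ord) : Ordinal) < δo :=
      fun n => (hlt (g n) δo hδo).2 (hg n)
    obtain ⟨γo, hγo, hγb⟩ := hbound _ h1
    have hγoθ : γo < θ.ord := hγo.trans hδo
    refine ⟨e ⟨γo, hγoθ⟩, ?_, ?_⟩
    · have : ((e.symm (e ⟨γo, hγoθ⟩) : Set.Iio θ.ord) : Ordinal) < δo := by
        rw [e.symm_apply_apply]; exact hγo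
      exact (hlt _ δo hδo).1 this
    · intro n
      exact (hlt (g n) γo hγoθ).1 (hγb n)

/-- A tree of height `θ > ℵ₁` (`θ` regular) with countable nonempty levels,
closed under restrictions and with the extension property, has a cofinal
branch.  Levels are indexed by elements of `θ.ord.ToType` (the ordinals
`< θ`); the `ε`-th level consists of functions from `{x : x < ε}` to `L`. -/
theorem no_branchless_tree_with_countable_levels
    (θ : Cardinal) (hreg : θ.IsRegular) (hθ : aleph 1 < θ)
    (L : Type*) :
    ¬ ∃ Λ : (ε : θ.ord.ToType) → Set ({x : θ.ord.ToType // x < ε} → L),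
      -- (i) countable nonempty levels
      (∀ ε, (Λ ε).Countable ∧ (Λ ε).Nonempty) ∧
      -- (ii) closed under restrictions
      (∀ (ε ζ : θ.ord.ToType) (h : ε < ζ), ∀ ν ∈ Λ ζ,
        (fun x : {x : θ.ord.ToType // x < ε} => ν ⟨x.1, x.2.trans h⟩) ∈ Λ ε) ∧
      -- (iii) every node extends to every higher level
      (∀ (ε ζ : θ.ord.ToType) (h : ε < ζ), ∀ ν ∈ Λ ε,
        ∃ ρ ∈ Λ ζ, ∀ x : {x : θ.ord.ToType // x < ε}, ρ ⟨x.1, x.2.trans h⟩ = ν x) ∧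
      -- (iv) no θ-branch
      ¬ ∃ η : θ.ord.ToType → L, ∀ ε : θ.ord.ToType,
          (fun x : {x : θ.ord.ToType // x < ε} => η x.1) ∈ Λ ε := by
  rintro ⟨Λ, Hc, Hr, He, Hb⟩
  have hne : Nonempty θ.ord.ToType := by
    rw [Ordinal.toType_nonempty_iff_ne_zero]
    simp only [ne_eq, Cardinal.ord_eq_zero]
    exact (aleph0_pos.trans_le hreg.aleph0_le).ne'
  obtain ⟨x₀⟩ := hne
  -- "goodness": functions in `Λ δ` are determined by their values below `γ`
  set good : θ.ord.ToType → θ.ord.ToType → Prop := fun γ δ =>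
    ∀ ν ∈ Λ δ, ∀ ν' ∈ Λ δ,
      (∀ (x : θ.ord.ToType) (hδ : x < δ), x < γ → ν ⟨x, hδ⟩ = ν' ⟨x, hδ⟩) → ν = ν'
    with hgood_def
  -- Step A: some γ* is good for unboundedly many δ
  have hstar : ∃ γstar : θ.ord.ToType, ∀ b, ∃ δ, b < δ ∧ γstar < δ ∧ good γstar δ := by
    by_contra hno
    push_neg at hno
    choose B hB using hno
    obtain ⟨δ, hx₀δ, hclosed, hbound⟩ := nb_core θ hreg hθ B x₀
    obtain ⟨f, hf⟩ := (Hc δ).1.exists_eq_range (Hc δ).2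
    -- difference points for distinct members of `Λ δ`
    have hdif : ∀ n m : ℕ, ∃ x : θ.ord.ToType, ∃ hx : x < δ,
        f n ≠ f m → f n ⟨x, hx⟩ ≠ f m ⟨x, hx⟩ := by
      intro n m
      by_cases h : f n = f m
      · exact ⟨x₀, hx₀δ, fun hc => absurd h hc⟩
      · obtain ⟨a, ha⟩ := Function.ne_iff.1 h
        exact ⟨a.1, a.2, fun _ => by simpa using ha⟩
    choose d hd hdp using hdif
    obtain ⟨γ, hγδ, hγb⟩ := hbound (fun k => d k.unpair.1 k.unpair.2) (fun k => hd _ _)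
    have hgoodγ : good γ δ := by
      intro ν hν ν' hν' hagree
      rw [hf] at hν hν'
      obtain ⟨n, rfl⟩ := hν
      obtain ⟨m, rfl⟩ := hν'
      by_contra hne'
      refine hdp n m hne' ?_
      have hlt : d n m < γ := by
        have := hγb (Nat.pair n m)
        simpa [Nat.unpair_pair] using this
      exact hagree (d n m) (hd n m) hlt
    exact hB γ δ (hclosed γ hγδ) hγδ hgoodγ
  obtain ⟨γstar, hγstar⟩ := hstar
  -- Step B: coherent extensions of a fixed node ν* at level γ*
  obtain ⟨νs, hνs⟩ := (Hc γstar).2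
  have Hρ : ∀ (δ : θ.ord.ToType) (h : γstar < δ), ∃ ρ, ρ ∈ Λ δ ∧
      ∀ x : {x : θ.ord.ToType // x < γstar}, ρ ⟨x.1, x.2.trans h⟩ = νs x := by
    intro δ h
    obtain ⟨ρ, h1, h2⟩ := He γstar δ h νs hνs
    exact ⟨ρ, h1, h2⟩
  choose ρ hρmem hρeq using Hρ
  have coh : ∀ (δ δ' : θ.ord.ToType) (h : γstar < δ) (h' : γstar < δ'), good γstar δ →
      δ < δ' → ∀ (x : θ.ord.ToType) (hx : x < δ) (hx' : x < δ'),
      ρ δ h ⟨x, hx⟩ = ρ δ' h' ⟨x, hx'⟩ := by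
    intro δ δ' h h' hg hδδ' x hx hx'
    have hmem : (fun y : {y : θ.ord.ToType // y < δ} => ρ δ' h' ⟨y.1, y.2.trans hδδ'⟩) ∈ Λ δ :=
      Hr δ δ' hδδ' _ (hρmem δ' h')
    have key : (fun y : {y : θ.ord.ToType // y < δ} => ρ δ' h' ⟨y.1, y.2.trans hδδ'⟩) = ρ δ h := by
      refine hg _ hmem _ (hρmem δ h) ?_
      intro y hyδ hyγ
      have e1 := hρeq δ' h' ⟨y, hyγ⟩
      have e2 := hρeq δ h ⟨y, hyγ⟩
      exact e1.trans e2.symm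
    have := congrFun key ⟨x, hx⟩
    exact this.symm
  have coh2 : ∀ (δ δ' : θ.ord.ToType) (h : γstar < δ) (h' : γstar < δ'),
      good γstar δ → good γstar δ' → ∀ (x : θ.ord.ToType) (hx : x < δ) (hx' : x < δ'),
      ρ δ h ⟨x, hx⟩ = ρ δ' h' ⟨x, hx'⟩ := by
    intro δ δ' h h' hg hg' x hx hx'
    rcases lt_trichotomy δ δ' with hlt | heq | hgt
    · exact coh δ δ' h h' hg hlt x hx hx'
    · subst heq; rfl
    · exact (coh δ' δ h' h hg' hgt x hx' hx).symm
  -- Step C: construct a branch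
  choose D hD1 hD2 hD3 using hγstar
  refine Hb ⟨fun x => ρ (D x) (hD2 x) ⟨x, hD1 x⟩, ?_⟩
  intro ε
  have hmem := Hr ε (D ε) (hD1 ε) _ (hρmem (D ε) (hD2 ε))
  have hfun : (fun x : {x : θ.ord.ToType // x < ε} => ρ (D x.1) (hD2 x.1) ⟨x.1, hD1 x.1⟩)
      = fun x : {x : θ.ord.ToType // x < ε} => ρ (D ε) (hD2 ε) ⟨x.1, x.2.trans (hD1 ε)⟩ := by
    funext x
    exact coh2 (D x.1) (D ε) (hD2 x.1) (hD2 ε) (hD3 x.1) (hD3 ε) x.1 (hD1 x.1)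
      (x.2.trans (hD1 ε))
  rw [hfun]
  exact hmem
end
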